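/- arXiv:1605.09193 — 2 statements merged into one kernel-verified Lean document; each statement's English description precedes it below -/
import Mathlib

section
/- For 0 < α < 1/2, the function f(n,α) = ∑_{l=0}^∞ ((1-2α)/(1-α))·(α/(1-α))^l · [ ∑_{m=0}^{n-l} C(m+n-1,m)·α^m·(1-α)^n·(α/(1-α))^{n+1-m-l} + ∑_{m=n-l+1}^∞ C(m+n-1,m)·α^m·(1-α)^n ] is strictly less than 1 for every n ≥ 0, and f(n,α) → 0 as n → ∞. -/
/-!
Write `β = α / (1 - α)`. The outer weights `(1 - 2α)/(1 - α) · β ^ l = (1 - β) β ^ l` form a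
geometric law for the pre-mined lead `l`, and for each `l` the bracket is the probability of
catching up, averaged over the negative binomial law `C(m+n-1,m) α^m (1-α)^n` of the attacker's
progress `m`. It is at most `1`, and strictly less than `1` for `l = 0`, whence `f(n,α) < 1`.
For the limit, `C(m+n-1,m) ≤ 2^(m+n)` and `β ≤ 2α` bound each of the `n + 1` terms with
`l ≤ n` by `O(n (4α(1-α))^n)`, while the terms with `l > n` add up to at most `β^(n+1)`.
-/

open Finset Filter

/-- The pre-mining-aware reversal-probability bound `f(n,α)` of the ε-arbitrary-robust
acceptance policy.  For `l ≤ n`, the inner part is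
`∑_{m=0}^{n-l} C(m+n-1,m) α^m (1-α)^n (α/(1-α))^{n+1-m-l} + ∑_{m=n-l+1}^∞ C(m+n-1,m) α^m (1-α)^n`;
for `l > n` the first sum is empty and the second runs over all `m ≥ 0`. -/
noncomputable def f (n : ℕ) (α : ℝ) : ℝ :=
  ∑' l : ℕ, ((1 - 2*α)/(1 - α)) * (α/(1 - α))^l *
    (if l ≤ n then
      (∑ m ∈ range (n - l + 1),
        (Nat.choose (m + n - 1) m : ℝ) * α^m * (1 - α)^n * (α/(1 - α))^(n + 1 - m - l)) +
      (∑' j : ℕ, (Nat.choose ((j + (n - l + 1)) + n - 1) (j + (n - l + 1)) : ℝ) *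
        α^(j + (n - l + 1)) * (1 - α)^n)
    else
      ∑' m : ℕ, (Nat.choose (m + n - 1) m : ℝ) * α^m * (1 - α)^n)

open Topology

-- For `n = 0` the truncated `m - 1` makes this the point mass at `m = 0`.
noncomputable def negBinomWeight (α : ℝ) (n m : ℕ) : ℝ :=
  (Nat.choose (m + n - 1) m : ℝ) * α ^ m * (1 - α) ^ n

noncomputable def catchUpProb (α : ℝ) (n l : ℕ) : ℝ :=
  if l ≤ n then
    (∑ m ∈ range (n - l + 1), negBinomWeight α n m * (α / (1 - α)) ^ (n + 1 - m - l)) +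
      ∑' j : ℕ, negBinomWeight α n (j + (n - l + 1))
  else ∑' m : ℕ, negBinomWeight α n m

section negBinomWeight

variable {α : ℝ}

lemma hasSum_negBinomWeight (hα : |α| < 1) (n : ℕ) : HasSum (negBinomWeight α n) 1 := by
  cases n with
  | zero =>
    convert hasSum_ite_eq 0 (1 : ℝ) with m
    rcases eq_or_ne m 0 with rfl | hm
    · simp [negBinomWeight]
    · simp [negBinomWeight, hm, Nat.choose_eq_zero_of_lt (by omega : m - 1 < m)]
  | succ k =>
    have hne : (1 - α) ^ (k + 1) ≠ 0 := pow_ne_zero _ (by linarith [le_abs_self α])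
    have h := (hasSum_choose_mul_geometric_of_norm_lt_one k (r := α) hα).mul_right
      ((1 - α) ^ (k + 1))
    rw [one_div, inv_mul_cancel₀ hne] at h
    refine (funext fun m ↦ ?_ : negBinomWeight α (k + 1) = _) ▸ h
    rw [negBinomWeight, show m + (k + 1) - 1 = m + k by omega, Nat.choose_symm_add]

lemma sum_range_add_tsum_negBinomWeight (hα : |α| < 1) (n k : ℕ) :
    ∑ m ∈ range k, negBinomWeight α n m + ∑' j, negBinomWeight α n (j + k) = 1 := by
  rw [(hasSum_negBinomWeight hα n).summable.sum_add_tsum_nat_add,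
    (hasSum_negBinomWeight hα n).tsum_eq]

lemma negBinomWeight_nonneg (h0 : 0 ≤ α) (h1 : α ≤ 1) (n m : ℕ) :
    0 ≤ negBinomWeight α n m := by
  have : 0 ≤ 1 - α := by linarith
  unfold negBinomWeight
  positivity

lemma negBinomWeight_le (h0 : 0 ≤ α) (h1 : α ≤ 1) (n m : ℕ) :
    negBinomWeight α n m ≤ (2 * (1 - α)) ^ n * (2 * α) ^ m := by
  have : 0 ≤ 1 - α := by linarith
  have hc : ((m + n - 1).choose m : ℝ) ≤ 2 ^ n * 2 ^ m := by
    rw [← pow_add]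
    exact_mod_cast (Nat.choose_le_two_pow _ _).trans (Nat.pow_le_pow_right two_pos (by omega))
  calc negBinomWeight α n m ≤ 2 ^ n * 2 ^ m * α ^ m * (1 - α) ^ n := by
        unfold negBinomWeight; gcongr
    _ = (2 * (1 - α)) ^ n * (2 * α) ^ m := by rw [mul_pow, mul_pow]; ring

end negBinomWeight

section geometric

variable {β : ℝ} {g : ℕ → ℝ}

lemma hasSum_one_sub_mul_geometric (h0 : 0 ≤ β) (h1 : β < 1) :
    HasSum (fun l ↦ (1 - β) * β ^ l) 1 := by
  simpa [mul_inv_cancel₀ (sub_ne_zero.2 h1.ne')] using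
    (hasSum_geometric_of_lt_one h0 h1).mul_left (1 - β)

lemma tsum_one_sub_mul_pow_mul_lt_one (h0 : 0 ≤ β) (h1 : β < 1) (hg0 : ∀ l, 0 ≤ g l)
    (hg1 : ∀ l, g l ≤ 1) (hg : g 0 < 1) : ∑' l, (1 - β) * β ^ l * g l < 1 := by
  have hw := hasSum_one_sub_mul_geometric h0 h1
  refine (Summable.tsum_lt_tsum_of_nonneg (i := 0)
    (fun l ↦ mul_nonneg (mul_nonneg (sub_nonneg.2 h1.le) (pow_nonneg h0 l)) (hg0 l))
    (fun l ↦ mul_le_of_le_one_right (mul_nonneg (sub_nonneg.2 h1.le) (pow_nonneg h0 l)) (hg1 l))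
    ?_ hw.summable).trans_eq hw.tsum_eq
  simpa using mul_lt_of_lt_one_right (sub_pos.2 h1) hg

lemma tsum_one_sub_mul_pow_mul_le (h0 : 0 ≤ β) (h1 : β < 1) (hg0 : ∀ l, 0 ≤ g l)
    (hg1 : ∀ l, g l ≤ 1) (n : ℕ) :
    ∑' l, (1 - β) * β ^ l * g l ≤ ∑ l ∈ range n, β ^ l * g l + β ^ n := by
  have hw := hasSum_one_sub_mul_geometric h0 h1
  have hle : ∀ l, (1 - β) * β ^ l * g l ≤ (1 - β) * β ^ l := fun l ↦
    mul_le_of_le_one_right (mul_nonneg (sub_nonneg.2 h1.le) (pow_nonneg h0 l)) (hg1 l)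
  have hs : Summable fun l ↦ (1 - β) * β ^ l * g l := hw.summable.of_nonneg_of_le
    (fun l ↦ mul_nonneg (mul_nonneg (sub_nonneg.2 h1.le) (pow_nonneg h0 l)) (hg0 l)) hle
  have htail : HasSum (fun j ↦ β ^ n * ((1 - β) * β ^ j)) (β ^ n) := by
    simpa using hw.mul_left (β ^ n)
  rw [← hs.sum_add_tsum_nat_add n]
  refine add_le_add (sum_le_sum fun l _ ↦ ?_) ?_
  · rw [mul_assoc]
    exact mul_le_of_le_one_left (mul_nonneg (pow_nonneg h0 l) (hg0 l)) (by linarith)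
  · refine (Summable.tsum_le_tsum (fun j ↦ ?_) ((summable_nat_add_iff n).2 hs)
      htail.summable).trans_eq htail.tsum_eq
    calc (1 - β) * β ^ (j + n) * g (j + n) ≤ (1 - β) * β ^ (j + n) := hle _
      _ = β ^ n * ((1 - β) * β ^ j) := by ring

end geometric

section catchUpProb

variable {α : ℝ} {n l : ℕ}

lemma catchUpProb_of_lt (hα : |α| < 1) (hl : n < l) : catchUpProb α n l = 1 := by
  rw [catchUpProb, if_neg hl.not_ge, (hasSum_negBinomWeight hα n).tsum_eq]

lemma catchUpProb_of_le (hα : |α| < 1) (hl : l ≤ n) :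
    catchUpProb α n l = 1 - ∑ m ∈ range (n - l + 1),
      negBinomWeight α n m * (1 - (α / (1 - α)) ^ (n + 1 - m - l)) := by
  have h := sum_range_add_tsum_negBinomWeight hα n (n - l + 1)
  simp only [catchUpProb, if_pos hl, mul_one_sub, sum_sub_distrib]
  linarith

variable (h0 : 0 ≤ α)
include h0

lemma catchUpProb_nonneg (h1 : α < 1) : 0 ≤ catchUpProb α n l := by
  have hw := negBinomWeight_nonneg h0 h1.le n
  have hβ : 0 ≤ α / (1 - α) := div_nonneg h0 (by linarith)
  unfold catchUpProb
  split_ifs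
  · exact add_nonneg (sum_nonneg fun m _ ↦ mul_nonneg (hw m) (pow_nonneg hβ _))
      (tsum_nonneg fun j ↦ hw _)
  · exact tsum_nonneg hw

lemma catchUpProb_le_one (h1 : α ≤ 1 / 2) : catchUpProb α n l ≤ 1 := by
  have hα : |α| < 1 := by rw [abs_of_nonneg h0]; linarith
  rcases le_or_gt l n with hl | hl
  · rw [catchUpProb_of_le hα hl, sub_le_self_iff]
    refine sum_nonneg fun m _ ↦ mul_nonneg (negBinomWeight_nonneg h0 (by linarith) n m)
      (sub_nonneg.2 (pow_le_one₀ (div_nonneg h0 (by linarith)) ?_))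
    rw [div_le_one (by linarith)]
    linarith
  · rw [catchUpProb_of_lt hα hl]

lemma catchUpProb_zero_lt_one (h1 : α < 1 / 2) : catchUpProb α n 0 < 1 := by
  have hα : |α| < 1 := by rw [abs_of_nonneg h0]; linarith
  have hβ0 : 0 ≤ α / (1 - α) := div_nonneg h0 (by linarith)
  have hβ1 : α / (1 - α) < 1 := by rw [div_lt_one (by linarith)]; linarith
  rw [catchUpProb_of_le hα n.zero_le, sub_lt_self_iff]
  refine sum_pos' (fun m _ ↦ mul_nonneg (negBinomWeight_nonneg h0 (by linarith) n m)
      (sub_nonneg.2 (pow_le_one₀ hβ0 hβ1.le))) ⟨0, by simp, ?_⟩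
  simp only [negBinomWeight, Nat.choose_zero_right, Nat.cast_one, pow_zero, one_mul]
  exact mul_pos (pow_pos (by linarith) n) (sub_pos.2 (pow_lt_one₀ hβ0 hβ1 (by omega)))

lemma pow_mul_negBinomWeight_le (h1 : α ≤ 1 / 2) (l m : ℕ) :
    (α / (1 - α)) ^ l * negBinomWeight α n m ≤ (2 * (1 - α)) ^ n * (2 * α) ^ (l + m) := by
  have hβ : α / (1 - α) ≤ 2 * α := by rw [div_le_iff₀ (by linarith)]; nlinarith
  have := negBinomWeight_nonneg h0 (by linarith) n m
  calc (α / (1 - α)) ^ l * negBinomWeight α n m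
      ≤ (2 * α) ^ l * ((2 * (1 - α)) ^ n * (2 * α) ^ m) := by
        gcongr
        · exact div_nonneg h0 (by linarith)
        · exact negBinomWeight_le h0 (by linarith) n m
    _ = (2 * (1 - α)) ^ n * (2 * α) ^ (l + m) := by ring

lemma pow_mul_catchUpProb_le (h1 : α < 1 / 2) (hl : l ≤ n) :
    (α / (1 - α)) ^ l * catchUpProb α n l ≤
      (n + 1 + (1 - 2 * α)⁻¹) * ((2 * (1 - α)) ^ n * (2 * α) ^ (n + 1)) := by
  set β := α / (1 - α)
  set E := (2 * (1 - α)) ^ n * (2 * α) ^ (n + 1)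
  have hE0 : 0 ≤ E := mul_nonneg (pow_nonneg (by linarith) n) (pow_nonneg (by linarith) _)
  have hhead (m : ℕ) (hm : m ∈ range (n - l + 1)) :
      β ^ l * (negBinomWeight α n m * β ^ (n + 1 - m - l)) ≤ E := by
    have hm : m ≤ n - l := Nat.lt_succ_iff.1 (mem_range.1 hm)
    calc β ^ l * (negBinomWeight α n m * β ^ (n + 1 - m - l))
        = β ^ (l + (n + 1 - m - l)) * negBinomWeight α n m := by ring
      _ ≤ E := (pow_mul_negBinomWeight_le h0 h1.le _ m).trans_eq
          (by rw [show l + (n + 1 - m - l) + m = n + 1 by omega])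
  have htail (j : ℕ) : β ^ l * negBinomWeight α n (j + (n - l + 1)) ≤ E * (2 * α) ^ j :=
    (pow_mul_negBinomWeight_le h0 h1.le l _).trans_eq
      (by rw [show l + (j + (n - l + 1)) = n + 1 + j by omega, pow_add]; ring)
  have hgeom : HasSum (fun j ↦ E * (2 * α) ^ j) (E * (1 - 2 * α)⁻¹) :=
    (hasSum_geometric_of_lt_one (by linarith) (by linarith)).mul_left E
  have hsumm : Summable fun j ↦ negBinomWeight α n (j + (n - l + 1)) :=
    (summable_nat_add_iff _).2
      (hasSum_negBinomWeight (by rw [abs_of_nonneg h0]; linarith) n).summable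
  rw [catchUpProb, if_pos hl, mul_add, mul_sum, ← tsum_mul_left]
  calc ∑ m ∈ range (n - l + 1), β ^ l * (negBinomWeight α n m * β ^ (n + 1 - m - l)) +
        ∑' j, β ^ l * negBinomWeight α n (j + (n - l + 1))
      ≤ (n - l + 1 : ℕ) * E + E * (1 - 2 * α)⁻¹ := by
        refine add_le_add ?_ ((Summable.tsum_le_tsum htail (hsumm.mul_left _)
          hgeom.summable).trans_eq hgeom.tsum_eq)
        simpa using sum_le_sum hhead
    _ ≤ (n + 1) * E + E * (1 - 2 * α)⁻¹ := by
        gcongr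
        exact_mod_cast Nat.succ_le_succ (n.sub_le l)
    _ = (n + 1 + (1 - 2 * α)⁻¹) * E := by ring

end catchUpProb

lemma tendsto_add_mul_add_mul_pow {ρ : ℝ} (hρ0 : 0 ≤ ρ) (hρ1 : ρ < 1) (a b : ℝ) :
    Tendsto (fun n : ℕ ↦ (n + a) * (n + b) * ρ ^ n) atTop (𝓝 0) := by
  have h := ((tendsto_pow_const_mul_const_pow_of_lt_one 2 hρ0 hρ1).add
    ((tendsto_pow_const_mul_const_pow_of_lt_one 1 hρ0 hρ1).const_mul (a + b))).add
    ((tendsto_pow_atTop_nhds_zero_of_lt_one hρ0 hρ1).const_mul (a * b))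
  rw [mul_zero, mul_zero, add_zero, add_zero] at h
  exact h.congr fun n ↦ by ring

section f

variable {α : ℝ}

lemma f_eq_tsum_catchUpProb (hα : α ≠ 1) (n : ℕ) :
    f n α = ∑' l, (1 - α / (1 - α)) * (α / (1 - α)) ^ l * catchUpProb α n l := by
  have hc : (1 - 2 * α) / (1 - α) = 1 - α / (1 - α) := by
    field_simp [sub_ne_zero.2 hα.symm]
    ring
  rw [f, hc]
  rfl

lemma f_le (h0 : 0 ≤ α) (h1 : α < 1 / 2) (n : ℕ) :
    f n α ≤ (n + 1) * (n + 1 + (1 - 2 * α)⁻¹) * ((2 * (1 - α)) ^ n * (2 * α) ^ (n + 1)) +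
      (α / (1 - α)) ^ (n + 1) := by
  have hβ0 : 0 ≤ α / (1 - α) := div_nonneg h0 (by linarith)
  have hβ1 : α / (1 - α) < 1 := by rw [div_lt_one (by linarith)]; linarith
  rw [f_eq_tsum_catchUpProb (by linarith)]
  refine (tsum_one_sub_mul_pow_mul_le hβ0 hβ1 (fun l ↦ catchUpProb_nonneg h0 (by linarith))
    (fun l ↦ catchUpProb_le_one h0 h1.le) (n + 1)).trans (add_le_add_left ?_ _)
  refine (sum_le_sum fun l hl ↦
    pow_mul_catchUpProb_le h0 h1 (Nat.lt_succ_iff.1 (mem_range.1 hl))).trans_eq ?_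
  simp only [sum_const, card_range, nsmul_eq_mul]
  push_cast
  ring

end f

/-- For `0 < α < 1/2`, `f(n,α) < 1` for every `n`, and `f(n,α) → 0` as `n → ∞`. -/
theorem stmt_4 (α : ℝ) (hα0 : 0 < α) (hα : α < 1/2) :
    (∀ n : ℕ, f n α < 1) ∧ Tendsto (fun n : ℕ => f n α) atTop (nhds 0) := by
  have hβ0 : 0 ≤ α / (1 - α) := div_nonneg hα0.le (by linarith)
  have hβ1 : α / (1 - α) < 1 := by rw [div_lt_one (by linarith)]; linarith
  have hf := f_eq_tsum_catchUpProb (α := α) (by linarith)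
  have hg0 (n l : ℕ) : 0 ≤ catchUpProb α n l := catchUpProb_nonneg hα0.le (by linarith)
  refine ⟨fun n ↦ hf n ▸ tsum_one_sub_mul_pow_mul_lt_one hβ0 hβ1 (hg0 n)
    (fun l ↦ catchUpProb_le_one hα0.le hα.le) (catchUpProb_zero_lt_one hα0.le hα), ?_⟩
  have hρ0 : 0 ≤ 2 * (1 - α) * (2 * α) := mul_nonneg (by linarith) (by linarith)
  have hρ1 : 2 * (1 - α) * (2 * α) < 1 := by nlinarith
  have hlim := ((tendsto_add_mul_add_mul_pow hρ0 hρ1 1 (1 + (1 - 2 * α)⁻¹)).const_mul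
    (2 * α)).add ((tendsto_pow_atTop_nhds_zero_of_lt_one hβ0 hβ1).const_mul (α / (1 - α)))
  rw [mul_zero, mul_zero, add_zero] at hlim
  refine squeeze_zero (fun n ↦ hf n ▸ tsum_nonneg fun l ↦
    mul_nonneg (mul_nonneg (sub_nonneg.2 hβ1.le) (pow_nonneg hβ0 l)) (hg0 n l))
    (fun n ↦ (f_le hα0.le hα n).trans_eq ?_) hlim
  rw [mul_pow (2 * (1 - α)) (2 * α) n]
  ring
end

section
/- For 0 < α < 1/2, let ε > 0. Then there exists n such that f(n,α) < ε, so the policy σ^arb_α = min{n : f(n,α) < ε} is well-defined (the minimum is attained over a nonempty set). -/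
/-!
Write `r = α/(1-α) = s²`. Bounding the binomial coefficient by a power of two gives
`C(m+n-1, m) αᵐ (1-α)ⁿ ≤ (2(1-α))ⁿ⁺ᵐ rᵐ`. Every summand of the double series defining
`f(n,α)` has the form `rˡ · C(m+n-1, m) αᵐ (1-α)ⁿ · rᵉ` with `n ≤ m + l + 2e`, so the total
power `r^(m+l+e) = s^(2(m+l+e))` can be traded for `sˡ sⁿ⁺ᵐ`. The summand is then at most
`sˡ ρⁿ⁺ᵐ` with `ρ = 2(1-α)s = 2√(α(1-α)) < 1`, and `f(n,α) = O(ρⁿ)`.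
-/

open Finset

open Filter Topology

noncomputable def negBinomialWeight (n m : ℕ) (α : ℝ) : ℝ :=
  (Nat.choose (m + n - 1) m : ℝ) * α ^ m * (1 - α) ^ n

noncomputable def reversalBracket (n : ℕ) (α : ℝ) (l : ℕ) : ℝ :=
  if l ≤ n then
    (∑ m ∈ range (n - l + 1), negBinomialWeight n m α * (α / (1 - α)) ^ (n + 1 - m - l)) +
      ∑' j : ℕ, negBinomialWeight n (j + (n - l + 1)) α
  else ∑' m : ℕ, negBinomialWeight n m α

theorem f_eq_tsum_reversalBracket (n : ℕ) (α : ℝ) :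
    f n α = ∑' l : ℕ, (1 - 2 * α) / (1 - α) * (α / (1 - α)) ^ l * reversalBracket n α l :=
  rfl

section

variable {α : ℝ}

theorem negBinomialWeight_nonneg (hα0 : 0 ≤ α) (hα1 : α ≤ 1) (n m : ℕ) :
    0 ≤ negBinomialWeight n m α := by
  have := sub_nonneg.2 hα1
  unfold negBinomialWeight
  positivity

theorem negBinomialWeight_le (hα0 : 0 ≤ α) (hα1 : α ≤ 1) (n m : ℕ) :
    negBinomialWeight n m α ≤ 2 ^ (n + m) * α ^ m * (1 - α) ^ n := by
  have hchoose : (Nat.choose (m + n - 1) m : ℝ) ≤ 2 ^ (n + m) := by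
    exact_mod_cast (Nat.choose_le_two_pow _ _).trans (Nat.pow_le_pow_right two_pos (by omega))
  have := sub_nonneg.2 hα1
  unfold negBinomialWeight
  gcongr

theorem reversalBracket_nonneg (hα0 : 0 ≤ α) (hα1 : α < 1) (n l : ℕ) :
    0 ≤ reversalBracket n α l := by
  have hw := negBinomialWeight_nonneg hα0 hα1.le n
  have hr : 0 ≤ α / (1 - α) := div_nonneg hα0 (sub_nonneg.2 hα1.le)
  unfold reversalBracket
  split_ifs
  · exact add_nonneg (sum_nonneg fun m _ => mul_nonneg (hw m) (pow_nonneg hr _))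
      (tsum_nonneg fun j => hw _)
  · exact tsum_nonneg hw

theorem f_nonneg (hα0 : 0 ≤ α) (hα : α < 1 / 2) (n : ℕ) : 0 ≤ f n α := by
  have hβ : 0 < 1 - α := by linarith
  have hc : 0 ≤ (1 - 2 * α) / (1 - α) := div_nonneg (by linarith) hβ.le
  rw [f_eq_tsum_reversalBracket]
  exact tsum_nonneg fun l =>
    mul_nonneg (mul_nonneg hc (by positivity)) (reversalBracket_nonneg hα0 (by linarith) n l)

variable {s : ℝ}

theorem pow_mul_negBinomialWeight_mul_pow_le (hα0 : 0 ≤ α) (hα1 : α < 1) (hs0 : 0 ≤ s)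
    (hs1 : s ≤ 1) (hs : s ^ 2 = α / (1 - α)) {n m l e : ℕ} (hnle : n ≤ m + l + 2 * e) :
    (α / (1 - α)) ^ l * (negBinomialWeight n m α * (α / (1 - α)) ^ e) ≤
      s ^ l * (2 * (1 - α) * s) ^ (n + m) := by
  have hβ : (1 - α) ≠ 0 := (sub_pos.2 hα1).ne'
  have hα : (1 - α) * s ^ 2 = α := by rw [hs]; field_simp
  rw [← hs]
  calc (s ^ 2) ^ l * (negBinomialWeight n m α * (s ^ 2) ^ e)
      ≤ (s ^ 2) ^ l * (2 ^ (n + m) * α ^ m * (1 - α) ^ n * (s ^ 2) ^ e) := by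
        gcongr; exact negBinomialWeight_le hα0 hα1.le n m
    _ = (2 * (1 - α)) ^ (n + m) * s ^ (2 * (m + l + e)) := by
        rw [show α ^ m = ((1 - α) * s ^ 2) ^ m by rw [hα]]
        simp only [mul_pow, pow_add, ← pow_mul]
        ring
    _ ≤ (2 * (1 - α)) ^ (n + m) * s ^ (n + m + l) := by
        have := sub_nonneg.2 hα1.le
        exact mul_le_mul_of_nonneg_left (pow_le_pow_of_le_one hs0 hs1 (by omega)) (by positivity)
    _ = s ^ l * (2 * (1 - α) * s) ^ (n + m) := by
        rw [mul_pow _ s, pow_add s]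
        ring

theorem pow_mul_reversalBracket_le (hα0 : 0 ≤ α) (hα1 : α < 1) (hs0 : 0 ≤ s) (hs1 : s ≤ 1)
    (hs : s ^ 2 = α / (1 - α)) (hρ : 2 * (1 - α) * s < 1) (n l : ℕ) :
    (α / (1 - α)) ^ l * reversalBracket n α l ≤
      s ^ l * ((2 * (1 - α) * s) ^ n / (1 - 2 * (1 - α) * s)) := by
  set ρ := 2 * (1 - α) * s
  have hρ0 : 0 ≤ ρ := by have := sub_nonneg.2 hα1.le; positivity
  set G : ℕ → ℝ := fun m => s ^ l * ρ ^ n * ρ ^ m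
  have hG : Summable G := (summable_geometric_of_lt_one hρ0 hρ).mul_left _
  have hGsum : ∑' m, G m = s ^ l * (ρ ^ n / (1 - ρ)) := by
    rw [tsum_mul_left, tsum_geometric_of_lt_one hρ0 hρ]; ring
  have hterm {m e : ℕ} (hnle : n ≤ m + l + 2 * e) :
      (α / (1 - α)) ^ l * (negBinomialWeight n m α * (α / (1 - α)) ^ e) ≤ G m := by
    rw [show G m = s ^ l * ρ ^ (n + m) by rw [pow_add, ← mul_assoc]]
    exact pow_mul_negBinomialWeight_mul_pow_le hα0 hα1 hs0 hs1 hs hnle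
  have htail (k : ℕ) (hk : n ≤ l + k) :
      (α / (1 - α)) ^ l * ∑' j, negBinomialWeight n (j + k) α ≤ ∑' j, G (j + k) := by
    have hle (j : ℕ) : (α / (1 - α)) ^ l * negBinomialWeight n (j + k) α ≤ G (j + k) := by
      simpa using hterm (m := j + k) (e := 0) (by omega)
    have hGk : Summable fun j => G (j + k) := (summable_nat_add_iff k).2 hG
    have hnonneg (j : ℕ) : 0 ≤ (α / (1 - α)) ^ l * negBinomialWeight n (j + k) α :=
      mul_nonneg (pow_nonneg (div_nonneg hα0 (sub_nonneg.2 hα1.le)) _)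
        (negBinomialWeight_nonneg hα0 hα1.le n _)
    rw [← tsum_mul_left]
    exact Summable.tsum_le_tsum hle (.of_nonneg_of_le hnonneg hle hGk) hGk
  rw [← hGsum, reversalBracket]
  split_ifs with hl
  · rw [mul_add, ← hG.sum_add_tsum_nat_add (n - l + 1), mul_sum]
    refine add_le_add (sum_le_sum fun m hm => hterm ?_) (htail _ (by omega))
    have := mem_range.1 hm
    omega
  · simpa using htail 0 (by omega)

theorem f_le_mul_pow (hα0 : 0 ≤ α) (hα : α < 1 / 2) (hs0 : 0 ≤ s) (hs1 : s < 1)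
    (hs : s ^ 2 = α / (1 - α)) (hρ : 2 * (1 - α) * s < 1) (n : ℕ) :
    f n α ≤ (1 - 2 * α) / (1 - α) / ((1 - 2 * (1 - α) * s) * (1 - s)) *
      (2 * (1 - α) * s) ^ n := by
  set ρ := 2 * (1 - α) * s
  set c := (1 - 2 * α) / (1 - α)
  have hc : 0 ≤ c := div_nonneg (by linarith) (by linarith)
  have hle (l : ℕ) :
      c * (α / (1 - α)) ^ l * reversalBracket n α l ≤ c * (ρ ^ n / (1 - ρ)) * s ^ l := by
    rw [mul_assoc, mul_assoc, mul_comm _ (s ^ l)]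
    exact mul_le_mul_of_nonneg_left
      (pow_mul_reversalBracket_le hα0 (by linarith) hs0 hs1.le hs hρ n l) hc
  have hnonneg (l : ℕ) : 0 ≤ c * (α / (1 - α)) ^ l * reversalBracket n α l :=
    mul_nonneg (mul_nonneg hc (pow_nonneg (div_nonneg hα0 (by linarith)) l))
      (reversalBracket_nonneg hα0 (by linarith) n l)
  have hgeom : Summable fun l => c * (ρ ^ n / (1 - ρ)) * s ^ l :=
    (summable_geometric_of_lt_one hs0 hs1).mul_left _
  calc f n α ≤ ∑' l, c * (ρ ^ n / (1 - ρ)) * s ^ l := by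
        rw [f_eq_tsum_reversalBracket]
        exact Summable.tsum_le_tsum hle (.of_nonneg_of_le hnonneg hle hgeom) hgeom
    _ = c / ((1 - ρ) * (1 - s)) * ρ ^ n := by
        rw [tsum_mul_left, tsum_geometric_of_lt_one hs0 hs1]
        field_simp

theorem tendsto_f_atTop_nhds_zero (hα0 : 0 ≤ α) (hα : α < 1 / 2) :
    Tendsto (fun n => f n α) atTop (𝓝 0) := by
  set s := √(α / (1 - α))
  have hβ : 0 < 1 - α := by linarith
  have hs : s ^ 2 = α / (1 - α) := Real.sq_sqrt (div_nonneg hα0 hβ.le)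
  have hs1 : s < 1 := (Real.sqrt_lt' one_pos).2 (by rw [one_pow, div_lt_one hβ]; linarith)
  have hρ0 : 0 ≤ 2 * (1 - α) * s := by positivity
  have hρ : 2 * (1 - α) * s < 1 := by
    have hρsq : (2 * (1 - α) * s) ^ 2 = 4 * α * (1 - α) := by
      rw [mul_pow, hs]; field_simp; ring
    nlinarith [sq_nonneg (1 - 2 * α)]
  refine squeeze_zero (f_nonneg hα0 hα) (f_le_mul_pow hα0 hα (Real.sqrt_nonneg _) hs1 hs hρ) ?_
  simpa using (tendsto_pow_atTop_nhds_zero_of_lt_one hρ0 hρ).const_mul _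

end

/-- For every `ε > 0` there is `n` with `f(n,α) < ε`, so the policy
`σ^arb = min {n : f(n,α) < ε}` is well-defined. -/
theorem stmt_15 (α : ℝ) (hα0 : 0 < α) (hα : α < 1/2) (ε : ℝ) (hε : 0 < ε) :
    {n : ℕ | f n α < ε}.Nonempty :=
  ((tendsto_f_atTop_nhds_zero hα0.le hα).eventually_lt_const hε).exists
end
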